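/- Let d be an odd prime and g ∈ ℂ^d a unit vector whose number of nonzero entries satisfies 2·‖g‖₀ > d. If rank(G(g)) ≠ d, then rank(G(g)) ≥ 2d. -/

import Mathlib

open Complex Finset

noncomputable section

/-- `gw d` is the primitive `d`-th root of unity `ω = exp(2πi/d)`. -/
def gw (d : ℕ) : ℂ := Complex.exp (2 * Real.pi * Complex.I / d)

/-- `modT d k l g = M^k T^ℓ g`, where `(Mg)_n = ω^n g_n` and `(Tg)_n = g_{n-1}`. -/
def modT (d : ℕ) (k l : ZMod d) (g : ZMod d → ℂ) : ZMod d → ℂ :=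
  fun n => gw d ^ (k.val * n.val) * g (n - l)

/-- `inn d x y = ⟨x,y⟩ = Σ_n x_n conj(y_n)`. -/
def inn (d : ℕ) [NeZero d] (x y : ZMod d → ℂ) : ℂ :=
  ∑ n : ZMod d, x n * (starRingEnd ℂ) (y n)

/-- The `d² × d²` Gram matrix `G(g)` with entries `|⟨M^k T^ℓ g, M^{k'} T^{ℓ'} g⟩|²`. -/
def Gmat (d : ℕ) [NeZero d] (g : ZMod d → ℂ) :
    Matrix (ZMod d × ZMod d) (ZMod d × ZMod d) ℂ :=
  fun p q =>
    ((‖inn d (modT d p.1 p.2 g) (modT d q.1 q.2 g)‖ ^ 2 : ℝ) : ℂ)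

/-!
Write `A(k, ℓ) = ⟨g, M^k T^ℓ g⟩` for the ambiguity function of `g`. Up to a phase,
`⟨M^k T^ℓ g, M^k' T^ℓ' g⟩ = A(k' - k, ℓ' - ℓ)`, so `G(g)` is a convolution matrix on `(ℤ/d)²` and
is diagonalised by the symplectic characters `ψ(kℓ' - ℓk')`. Since `|A|²` is its own symplectic
Fourier transform up to the factor `d` (a consequence of Wiener–Khinchin for the lag products
`g(n) conj g(n - ℓ)`, whose Fourier transforms are the columns `A(·, ℓ)`), `rank G(g)` is the size
of the support of `A`, which we count column by column.

Each column is nonempty, since `2‖g‖₀ > d` makes some lag product nonzero. If a column `ℓ₀ ≠ 0`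
is a single point `k₀`, then `|g(n + ℓ₀)| |g(n)|` is constant, so `|g|` has period `2ℓ₀` and is
constant because `d` is an odd prime; column `ℓ + ℓ₀` is then column `ℓ` translated by `k₀`, so
every column is a singleton and the rank is `d`. Otherwise the columns `ℓ ≠ 0` have at least two
points, and so does column `0` unless it is `{0}`. In that case `|g|` is constant again, and a
column `{k₁, k₂}` is impossible: `|d g(n) conj g(n - ℓ)|² = 1` for all `n` would make
`A(k₁, ℓ) conj A(k₂, ℓ)` a nonzero Fourier coefficient of a constant function. So the rank is at
least `2d`, resp. `1 + 3(d - 1) ≥ 2d`.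
-/

open Matrix ZMod ComplexConjugate

lemma Matrix.rank_mul_diagonal_mul {ι K : Type*} [Fintype ι] [DecidableEq ι] [Field K]
    [DecidableEq K] (A B : Matrix ι ι K) (hA : IsUnit A.det) (hB : IsUnit B.det) (c : ι → K) :
    (A * diagonal c * B).rank = Fintype.card {i // c i ≠ 0} := by
  rw [rank_mul_eq_left_of_isUnit_det _ _ hB, rank_mul_eq_right_of_isUnit_det _ _ hA, rank_diagonal]

lemma Finset.exists_mem_sub_mem {G : Type*} [AddGroup G] [Fintype G] [DecidableEq G]
    {s : Finset G} (hs : Fintype.card G < 2 * #s) (a : G) : ∃ x ∈ s, x - a ∈ s := by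
  obtain ⟨x, hx⟩ := Finset.inter_nonempty_of_card_lt_card_add_card (subset_univ s)
    (subset_univ (s.map (Equiv.addRight a).toEmbedding)) (by rw [card_map, card_univ]; omega)
  simp only [mem_inter, mem_map_equiv] at hx
  exact ⟨x, hx.1, by simpa [sub_eq_add_neg] using hx.2⟩

lemma Function.Periodic.apply_eq_apply_of_ne_zero {α : Type*} {p : ℕ} [Fact p.Prime]
    {u : ZMod p → α} {c : ZMod p} (h : Function.Periodic u c) (hc : c ≠ 0) (m n : ZMod p) :
    u m = u n := by
  have := h.nsmul ((m - n) / c).val n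
  rwa [nsmul_eq_mul, natCast_zmod_val, div_mul_cancel₀ _ hc, add_sub_cancel] at this

lemma two_mul_card_le_sum {ι : Type*} [Fintype ι] [DecidableEq ι] {f : ι → ℕ} {i : ι}
    (hι : 2 ≤ Fintype.card ι) (hpos : ∀ j, 1 ≤ f j) (hne_one : ∀ j ≠ i, f j ≠ 1)
    (hne_two : f i = 1 → ∀ j ≠ i, f j ≠ 2) : 2 * Fintype.card ι ≤ ∑ j, f j := by
  rw [← add_sum_erase univ f (mem_univ i)]
  have hcard : #(univ.erase i) = Fintype.card ι - 1 := by
    rw [card_erase_of_mem (mem_univ i), card_univ]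
  have hi := hpos i
  by_cases hfi : f i = 1
  · have := card_nsmul_le_sum (univ.erase i) (fun j ↦ f j) 3 fun j hj ↦ by
      have := hpos j
      have := hne_one j (ne_of_mem_erase hj)
      have := hne_two hfi j (ne_of_mem_erase hj)
      omega
    rw [hcard, smul_eq_mul] at this
    omega
  · have := card_nsmul_le_sum (univ.erase i) (fun j ↦ f j) 2 fun j hj ↦ by
      have := hpos j
      have := hne_one j (ne_of_mem_erase hj)
      omega
    rw [hcard, smul_eq_mul] at this
    omega

variable {d : ℕ}

def IsFlat (g : ZMod d → ℂ) : Prop := ∀ n, ‖g n‖ ^ 2 = (d : ℝ)⁻¹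

lemma IsFlat.mul_conj {g : ZMod d → ℂ} (hflat : IsFlat g) (n : ZMod d) :
    g n * conj (g n) = (d : ℂ)⁻¹ := by
  rw [Complex.mul_conj', ← Complex.ofReal_pow, hflat n, Complex.ofReal_inv,
    Complex.ofReal_natCast]

variable [NeZero d]

lemma gw_pow_val_mul_val (k n : ZMod d) : gw d ^ (k.val * n.val) = stdAddChar (k * n) := by
  rw [← natCast_zmod_val (k * n), val_mul, natCast_mod, stdAddChar_apply, toCircle_natCast,
    gw, ← Complex.exp_nat_mul]
  push_cast
  ring_nf

lemma sum_stdAddChar_mul (b : ZMod d) :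
    ∑ x : ZMod d, stdAddChar (x * b) = if b = 0 then (d : ℂ) else 0 := by
  rw [AddChar.sum_mulShift b (isPrimitive_stdAddChar d), ZMod.card]
  split_ifs <;> simp

lemma stdAddChar_ne_zero (x : ZMod d) : stdAddChar x ≠ 0 :=
  ne_zero_of_norm_ne_zero (by rw [AddChar.norm_apply]; exact one_ne_zero)

def autocorrelation (Φ : ZMod d → ℂ) (m : ZMod d) : ℂ := ∑ n, Φ n * conj (Φ (n - m))

lemma conj_dft_apply (Φ : ZMod d → ℂ) (k : ZMod d) :
    conj (𝓕 Φ k) = ∑ j, stdAddChar (j * k) * conj (Φ j) := by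
  simp [dft_apply, map_sum, ← AddChar.map_neg_eq_conj]

lemma dft_autocorrelation (Φ : ZMod d → ℂ) :
    𝓕 (autocorrelation Φ) = fun k ↦ 𝓕 Φ k * conj (𝓕 Φ k) := by
  ext k
  rw [conj_dft_apply, dft_apply, dft_apply, Finset.sum_mul_sum]
  simp only [autocorrelation, smul_eq_mul, Finset.mul_sum]
  rw [Finset.sum_comm]
  refine Finset.sum_congr rfl fun n _ ↦ (Fintype.sum_equiv (Equiv.subLeft n) _ _ fun m ↦ ?_)
  simp only [Equiv.subLeft_apply]
  rw [show -(m * k) = -(n * k) + (n - m) * k by ring, AddChar.map_add_eq_mul]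
  ring

lemma sum_stdAddChar_mul_dft (Φ : ZMod d → ℂ) (n : ZMod d) :
    ∑ k, stdAddChar (k * n) * 𝓕 Φ k = d * Φ n := by
  have h := congrFun (LinearEquiv.symm_apply_apply dft Φ) n
  rw [invDFT_apply, smul_eq_mul, inv_mul_eq_iff_eq_mul₀ (NeZero.ne _)] at h
  simpa using h

lemma sum_stdAddChar_mul_dft_mul_conj (Φ : ZMod d → ℂ) (m : ZMod d) :
    ∑ k, stdAddChar (k * m) * (𝓕 Φ k * conj (𝓕 Φ k)) = d * autocorrelation Φ m := by
  simp only [← sum_stdAddChar_mul_dft, dft_autocorrelation]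

def lagProduct (g : ZMod d → ℂ) (ℓ n : ZMod d) : ℂ := g n * conj (g (n - ℓ))

def ambiguity (g : ZMod d → ℂ) (ν : ZMod d × ZMod d) : ℂ := inn d g (modT d ν.1 ν.2 g)

lemma modT_apply (k l : ZMod d) (g : ZMod d → ℂ) (n : ZMod d) :
    modT d k l g n = stdAddChar (k * n) * g (n - l) := by
  rw [modT, gw_pow_val_mul_val]

lemma ambiguity_eq_dft (g : ZMod d → ℂ) (k ℓ : ZMod d) :
    ambiguity g (k, ℓ) = 𝓕 (lagProduct g ℓ) k := by
  simp only [ambiguity, inn, modT_apply, dft_apply, lagProduct, smul_eq_mul, map_mul,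
    ← AddChar.map_neg_eq_conj]
  exact Finset.sum_congr rfl fun n _ ↦ by ring_nf

lemma ambiguity_apply (g : ZMod d → ℂ) (k ℓ : ZMod d) :
    ambiguity g (k, ℓ) = ∑ n, stdAddChar (-(n * k)) * lagProduct g ℓ n := by
  simp only [ambiguity_eq_dft, dft_apply, smul_eq_mul]

lemma sum_stdAddChar_mul_ambiguity (g : ZMod d → ℂ) (ℓ n : ZMod d) :
    ∑ k, stdAddChar (k * n) * ambiguity g (k, ℓ) = d * lagProduct g ℓ n := by
  simp only [ambiguity_eq_dft, sum_stdAddChar_mul_dft]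

lemma autocorrelation_lagProduct_comm (g : ZMod d → ℂ) (ℓ m : ZMod d) :
    autocorrelation (lagProduct g ℓ) m = autocorrelation (lagProduct g m) ℓ := by
  simp only [autocorrelation, lagProduct, map_mul, Complex.conj_conj, sub_right_comm _ ℓ m]
  exact Finset.sum_congr rfl fun n _ ↦ by ring

lemma sum_symplectic_mul_ambiguity_mul_conj (g : ZMod d → ℂ) (k ℓ : ZMod d) :
    ∑ ν : ZMod d × ZMod d, stdAddChar (ν.1 * ℓ - ν.2 * k) * (ambiguity g ν * conj (ambiguity g ν))
      = d * (ambiguity g (k, ℓ) * conj (ambiguity g (k, ℓ))) := by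
  calc _ = ∑ m, stdAddChar (-(m * k)) *
          ∑ j, stdAddChar (j * ℓ) * (ambiguity g (j, m) * conj (ambiguity g (j, m))) := by
        simp only [Fintype.sum_prod_type_right, Finset.mul_sum, sub_eq_add_neg,
          AddChar.map_add_eq_mul]
        exact Finset.sum_congr rfl fun m _ ↦ Finset.sum_congr rfl fun j _ ↦ by ring
    _ = d * ∑ m, stdAddChar (-(m * k)) • autocorrelation (lagProduct g ℓ) m := by
        simp only [ambiguity_eq_dft, sum_stdAddChar_mul_dft_mul_conj,
          autocorrelation_lagProduct_comm g ℓ, Finset.mul_sum, smul_eq_mul]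
        exact Finset.sum_congr rfl fun m _ ↦ by ring
    _ = _ := by rw [← dft_apply, dft_autocorrelation, ambiguity_eq_dft]

lemma inn_modT_modT (g : ZMod d → ℂ) (p q : ZMod d × ZMod d) :
    inn d (modT d p.1 p.2 g) (modT d q.1 q.2 g)
      = stdAddChar ((p.1 - q.1) * p.2) * ambiguity g (q - p) := by
  simp only [ambiguity, inn, modT_apply, map_mul, ← AddChar.map_neg_eq_conj, Finset.mul_sum]
  refine Fintype.sum_equiv (Equiv.subRight p.2) _ _ fun n ↦ ?_
  simp only [Equiv.subRight_apply, Prod.fst_sub, Prod.snd_sub, sub_sub_sub_cancel_right]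
  have hphase : stdAddChar (p.1 * n) * stdAddChar (-(q.1 * n))
      = stdAddChar ((p.1 - q.1) * p.2) * stdAddChar (-((q.1 - p.1) * (n - p.2))) := by
    rw [← AddChar.map_add_eq_mul, ← AddChar.map_add_eq_mul]
    ring_nf
  linear_combination g (n - p.2) * conj (g (n - q.2)) * hphase

lemma Gmat_apply (g : ZMod d → ℂ) (p q : ZMod d × ZMod d) :
    Gmat d g p q = ambiguity g (q - p) * conj (ambiguity g (q - p)) := by
  rw [Gmat, inn_modT_modT, norm_mul, AddChar.norm_apply, one_mul, Complex.mul_conj',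
    Complex.ofReal_pow]

def symplecticDFT (d : ℕ) [NeZero d] : Matrix (ZMod d × ZMod d) (ZMod d × ZMod d) ℂ :=
  fun p ν ↦ stdAddChar (p.1 * ν.2 - p.2 * ν.1)

lemma symplecticDFT_mul_star (p q ν : ZMod d × ZMod d) :
    symplecticDFT d p ν * star (symplecticDFT d q ν)
      = stdAddChar (ν.1 * (q - p).2 - ν.2 * (q - p).1) := by
  rw [symplecticDFT, symplecticDFT, ← starRingEnd_apply, ← AddChar.map_neg_eq_conj,
    ← AddChar.map_add_eq_mul, Prod.fst_sub, Prod.snd_sub]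
  ring_nf

lemma symplecticDFT_mul_conjTranspose :
    symplecticDFT d * (symplecticDFT d)ᴴ = ((d : ℂ) ^ 2) • 1 := by
  ext p q
  have hchar (ν : ZMod d × ZMod d) : symplecticDFT d p ν * star (symplecticDFT d q ν)
      = stdAddChar (ν.1 * (q.2 - p.2)) * stdAddChar (ν.2 * (p.1 - q.1)) := by
    rw [symplecticDFT_mul_star, ← AddChar.map_add_eq_mul, Prod.fst_sub, Prod.snd_sub]
    ring_nf
  simp only [mul_apply, conjTranspose_apply, hchar]
  rw [Matrix.smul_apply, one_apply, Fintype.sum_prod_type]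
  simp only [← Finset.sum_mul_sum, sum_stdAddChar_mul]
  split_ifs <;> simp_all [sq, Prod.ext_iff, sub_eq_zero, eq_comm]

lemma isUnit_det_symplecticDFT : IsUnit (symplecticDFT d).det :=
  isUnit_det_of_right_inverse (B := ((d : ℂ) ^ 2)⁻¹ • (symplecticDFT d)ᴴ) <| by
    rw [Matrix.mul_smul, symplecticDFT_mul_conjTranspose, smul_smul,
      inv_mul_cancel₀ (pow_ne_zero 2 (NeZero.ne _)), one_smul]

lemma Gmat_eq_symplecticDFT_mul_diagonal (g : ZMod d → ℂ) :
    Gmat d g = symplecticDFT d *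
      diagonal (fun ν ↦ (d : ℂ)⁻¹ * (ambiguity g ν * conj (ambiguity g ν))) *
        (symplecticDFT d)ᴴ := by
  ext p q
  set w : ZMod d × ZMod d → ℂ := fun ν ↦ ambiguity g ν * conj (ambiguity g ν)
  have hterm (ν : ZMod d × ZMod d) :
      (symplecticDFT d * diagonal (fun ν ↦ (d : ℂ)⁻¹ * w ν)) p ν * (symplecticDFT d)ᴴ ν q
        = (d : ℂ)⁻¹ * (stdAddChar (ν.1 * (q - p).2 - ν.2 * (q - p).1) * w ν) := by
    rw [mul_diagonal, conjTranspose_apply, mul_right_comm, symplecticDFT_mul_star]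
    ring
  rw [Gmat_apply, mul_apply, Finset.sum_congr rfl fun ν _ ↦ hterm ν, ← Finset.mul_sum,
    sum_symplectic_mul_ambiguity_mul_conj, Prod.mk.eta, inv_mul_cancel_left₀ (NeZero.ne _)]

lemma rank_Gmat (g : ZMod d → ℂ) : (Gmat d g).rank = #{ν | ambiguity g ν ≠ 0} := by
  have hstar : IsUnit (symplecticDFT d)ᴴ.det := by
    rw [det_conjTranspose]
    exact isUnit_det_symplecticDFT.star
  rw [Gmat_eq_symplecticDFT_mul_diagonal,
    Matrix.rank_mul_diagonal_mul _ _ isUnit_det_symplecticDFT hstar, Fintype.card_subtype]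
  simp [NeZero.ne d]

lemma ambiguity_zero_zero {g : ZMod d → ℂ} (hg : ∑ n, ‖g n‖ ^ 2 = 1) : ambiguity g (0, 0) = 1 := by
  rw [ambiguity_apply]
  simp only [mul_zero, neg_zero, AddChar.map_zero_eq_one, one_mul, lagProduct, sub_zero,
    Complex.mul_conj']
  exact_mod_cast hg

def ambiguityColumn (g : ZMod d → ℂ) (ℓ : ZMod d) : Finset (ZMod d) :=
  {k | ambiguity g (k, ℓ) ≠ 0}

lemma mem_ambiguityColumn {g : ZMod d → ℂ} {k ℓ : ZMod d} :
    k ∈ ambiguityColumn g ℓ ↔ ambiguity g (k, ℓ) ≠ 0 := by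
  simp [ambiguityColumn]

lemma card_support_ambiguity (g : ZMod d → ℂ) :
    #{ν | ambiguity g ν ≠ 0} = ∑ ℓ, #(ambiguityColumn g ℓ) := by
  simp only [ambiguityColumn, Finset.card_filter, Fintype.sum_prod_type_right]

lemma mul_lagProduct_eq_sum_ambiguityColumn (g : ZMod d → ℂ) (ℓ n : ZMod d) :
    d * lagProduct g ℓ n = ∑ k ∈ ambiguityColumn g ℓ, stdAddChar (k * n) * ambiguity g (k, ℓ) := by
  rw [← sum_stdAddChar_mul_ambiguity, ambiguityColumn, Finset.sum_filter_of_ne]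
  exact fun k _ h ↦ right_ne_zero_of_mul h

lemma ambiguityColumn_nonempty {g : ZMod d → ℂ} (hsupp : d < 2 * {n : ZMod d | g n ≠ 0}.ncard)
    (ℓ : ZMod d) : (ambiguityColumn g ℓ).Nonempty := by
  rw [Set.ncard_eq_toFinset_card', Set.toFinset_ofPred] at hsupp
  obtain ⟨n, hn, hnℓ⟩ := Finset.exists_mem_sub_mem (by rwa [ZMod.card]) ℓ
  have hlag : (d : ℂ) * lagProduct g ℓ n ≠ 0 := by
    simp_all [lagProduct, NeZero.ne d]
  rw [mul_lagProduct_eq_sum_ambiguityColumn] at hlag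
  exact Finset.nonempty_of_sum_ne_zero hlag

lemma isFlat_of_norm_eq {g : ZMod d → ℂ} (hg : ∑ n, ‖g n‖ ^ 2 = 1)
    (h : ∀ m n, ‖g m‖ = ‖g n‖) : IsFlat g := by
  intro n
  rw [Finset.sum_congr rfl fun m _ ↦ by rw [h m n], Finset.sum_const, card_univ, ZMod.card,
    nsmul_eq_mul] at hg
  exact eq_inv_of_mul_eq_one_right hg

lemma isFlat_of_card_ambiguityColumn_zero {g : ZMod d → ℂ} (hg : ∑ n, ‖g n‖ ^ 2 = 1)
    (h : #(ambiguityColumn g 0) = 1) : IsFlat g := by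
  have h0 : ambiguityColumn g 0 = {0} := by
    obtain ⟨k, hk⟩ := Finset.card_eq_one.mp h
    have : (0 : ZMod d) ∈ ambiguityColumn g 0 :=
      mem_ambiguityColumn.mpr (by rw [ambiguity_zero_zero hg]; exact one_ne_zero)
    rw [hk] at this
    rw [hk, mem_singleton.mp this]
  intro n
  have hn := mul_lagProduct_eq_sum_ambiguityColumn g 0 n
  rw [h0, sum_singleton, zero_mul, AddChar.map_zero_eq_one, one_mul, ambiguity_zero_zero hg,
    lagProduct, sub_zero, Complex.mul_conj'] at hn
  exact eq_inv_of_mul_eq_one_right (by exact_mod_cast hn)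

lemma isFlat_of_ambiguityColumn_eq_singleton [Fact d.Prime] (h2 : (2 : ZMod d) ≠ 0)
    {g : ZMod d → ℂ} (hg : ∑ n, ‖g n‖ ^ 2 = 1) {ℓ k₀ : ZMod d} (hℓ : ℓ ≠ 0)
    (h : ambiguityColumn g ℓ = {k₀}) : IsFlat g := by
  have hc : ambiguity g (k₀, ℓ) ≠ 0 := mem_ambiguityColumn.mp (h ▸ mem_singleton_self k₀)
  have hnorm (n : ZMod d) : d * (‖g (n + ℓ)‖ * ‖g n‖) = ‖ambiguity g (k₀, ℓ)‖ := by
    have := congrArg norm (mul_lagProduct_eq_sum_ambiguityColumn g ℓ (n + ℓ))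
    simpa [h, lagProduct, AddChar.norm_apply] using this
  have hper : Function.Periodic (fun n ↦ ‖g n‖) (2 * ℓ) := by
    intro n
    have hℓn : (d : ℝ) * ‖g (n + ℓ)‖ ≠ 0 := by
      refine mul_ne_zero (NeZero.ne _) fun h0 ↦ hc ?_
      rw [← norm_eq_zero, ← hnorm n, h0, zero_mul, mul_zero]
    have hnext := hnorm (n + ℓ)
    rw [add_assoc, ← two_mul] at hnext
    refine mul_left_cancel₀ hℓn ?_
    linear_combination hnext - hnorm n
  exact isFlat_of_norm_eq hg (hper.apply_eq_apply_of_ne_zero (mul_ne_zero h2 hℓ))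

lemma ambiguity_add_snd {g : ZMod d → ℂ} (hflat : IsFlat g) {ℓ₀ k₀ : ZMod d}
    (h : ambiguityColumn g ℓ₀ = {k₀}) (k ℓ : ZMod d) :
    ambiguity g (k, ℓ + ℓ₀)
      = ambiguity g (k₀, ℓ₀) * stdAddChar (-(k₀ * ℓ)) * ambiguity g (k - k₀, ℓ) := by
  set c := ambiguity g (k₀, ℓ₀)
  have hshift (m : ZMod d) : conj (g (m - ℓ₀)) = c * stdAddChar (k₀ * m) * conj (g m) := by
    have hlag := mul_lagProduct_eq_sum_ambiguityColumn g ℓ₀ m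
    rw [h, sum_singleton, lagProduct] at hlag
    have hd : (d : ℂ) * (d : ℂ)⁻¹ = 1 := mul_inv_cancel₀ (NeZero.ne _)
    linear_combination conj (g m) * hlag - d * conj (g (m - ℓ₀)) * hflat.mul_conj m
      - conj (g (m - ℓ₀)) * hd
  rw [ambiguity_apply, ambiguity_apply, Finset.mul_sum]
  refine sum_congr rfl fun n _ ↦ ?_
  have hphase : stdAddChar (-(n * k)) * stdAddChar (k₀ * (n - ℓ))
      = stdAddChar (-(k₀ * ℓ)) * stdAddChar (-(n * (k - k₀))) := by
    rw [← AddChar.map_add_eq_mul, ← AddChar.map_add_eq_mul]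
    ring_nf
  rw [lagProduct, lagProduct, ← sub_sub, hshift]
  linear_combination c * g n * conj (g (n - ℓ)) * hphase

lemma card_ambiguityColumn_add {g : ZMod d → ℂ} (hflat : IsFlat g) {ℓ₀ k₀ : ZMod d}
    (h : ambiguityColumn g ℓ₀ = {k₀}) (ℓ : ZMod d) :
    #(ambiguityColumn g (ℓ + ℓ₀)) = #(ambiguityColumn g ℓ) := by
  have hc : ambiguity g (k₀, ℓ₀) ≠ 0 := mem_ambiguityColumn.mp (h ▸ mem_singleton_self k₀)
  have hcol : ambiguityColumn g (ℓ + ℓ₀)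
      = (ambiguityColumn g ℓ).map (Equiv.addRight k₀).toEmbedding := by
    ext k
    simp [mem_ambiguityColumn, ambiguity_add_snd hflat h, hc, stdAddChar_ne_zero, sub_eq_add_neg]
  rw [hcol, card_map]

lemma card_ambiguityColumn_eq_one [Fact d.Prime] (h2 : (2 : ZMod d) ≠ 0)
    {g : ZMod d → ℂ} (hg : ∑ n, ‖g n‖ ^ 2 = 1) {ℓ₀ k₀ : ZMod d} (hℓ₀ : ℓ₀ ≠ 0)
    (h : ambiguityColumn g ℓ₀ = {k₀}) (ℓ : ZMod d) : #(ambiguityColumn g ℓ) = 1 := by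
  have hper : Function.Periodic (fun ℓ ↦ #(ambiguityColumn g ℓ)) ℓ₀ :=
    card_ambiguityColumn_add (isFlat_of_ambiguityColumn_eq_singleton h2 hg hℓ₀ h) h
  rw [hper.apply_eq_apply_of_ne_zero hℓ₀ ℓ ℓ₀, h, card_singleton]

lemma eq_zero_of_forall_stdAddChar_mul_add_eq {a : ZMod d} (ha : a ≠ 0) (ha2 : a + a ≠ 0)
    {w w' C : ℂ} (h : ∀ n, stdAddChar (n * a) * w + stdAddChar (-(n * a)) * w' = C) : w = 0 := by
  have hterm (n : ZMod d) : stdAddChar (n * -a) * C = w + stdAddChar (n * -(a + a)) * w' := by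
    rw [← h n, mul_add, ← mul_assoc, ← mul_assoc, ← AddChar.map_add_eq_mul,
      ← AddChar.map_add_eq_mul]
    ring_nf
    simp
  have hsum := Finset.sum_congr rfl fun n (_ : n ∈ univ) ↦ hterm n
  rw [← sum_mul, sum_add_distrib, ← sum_mul, sum_stdAddChar_mul, sum_stdAddChar_mul,
    if_neg (neg_ne_zero.mpr ha), if_neg (neg_ne_zero.mpr ha2)] at hsum
  simpa [NeZero.ne d] using hsum

lemma IsFlat.mul_lagProduct_mul_conj {g : ZMod d → ℂ} (hflat : IsFlat g) (ℓ n : ZMod d) :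
    d * lagProduct g ℓ n * conj (d * lagProduct g ℓ n) = 1 := by
  calc _ = d * d * (g n * conj (g n)) * (g (n - ℓ) * conj (g (n - ℓ))) := by
        simp only [lagProduct, map_mul, Complex.conj_conj, Complex.conj_natCast]
        ring
    _ = 1 := by
        have hd : (d : ℂ) ≠ 0 := NeZero.ne _
        rw [hflat.mul_conj, hflat.mul_conj]
        field_simp

lemma card_ambiguityColumn_ne_two [Fact d.Prime] (h2 : (2 : ZMod d) ≠ 0) {g : ZMod d → ℂ}
    (hflat : IsFlat g) (ℓ : ZMod d) : #(ambiguityColumn g ℓ) ≠ 2 := by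
  intro hcard
  obtain ⟨k₁, k₂, hne, hcol⟩ := card_eq_two.mp hcard
  have hA₁ : ambiguity g (k₁, ℓ) ≠ 0 := mem_ambiguityColumn.mp (hcol ▸ mem_insert_self _ _)
  have hA₂ : ambiguity g (k₂, ℓ) ≠ 0 :=
    mem_ambiguityColumn.mp (hcol ▸ mem_insert_of_mem (mem_singleton_self _))
  set A₁ := ambiguity g (k₁, ℓ)
  set A₂ := ambiguity g (k₂, ℓ)
  have ha : k₁ - k₂ ≠ 0 := sub_ne_zero.mpr hne
  have hexpand (n : ZMod d) : stdAddChar (n * (k₁ - k₂)) * (A₁ * conj A₂)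
      + stdAddChar (-(n * (k₁ - k₂))) * (A₂ * conj A₁) = 1 - A₁ * conj A₁ - A₂ * conj A₂ := by
    have hz := hflat.mul_lagProduct_mul_conj ℓ n
    have hphase : stdAddChar (k₁ * n) = stdAddChar (k₂ * n) * stdAddChar (n * (k₁ - k₂)) := by
      rw [← AddChar.map_add_eq_mul]
      ring_nf
    have hunit (x : ZMod d) : stdAddChar x * stdAddChar (-x) = 1 := by
      rw [← AddChar.map_add_eq_mul, add_neg_cancel, AddChar.map_zero_eq_one]
    rw [mul_lagProduct_eq_sum_ambiguityColumn, hcol, sum_pair hne, hphase] at hz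
    simp only [map_add, map_mul, ← AddChar.map_neg_eq_conj] at hz
    linear_combination hz - A₁ * conj A₁ * hunit (n * (k₁ - k₂))
      - (stdAddChar (n * (k₁ - k₂)) * A₁ + A₂) * (stdAddChar (-(n * (k₁ - k₂))) * conj A₁ + conj A₂)
        * hunit (k₂ * n)
  have := eq_zero_of_forall_stdAddChar_mul_add_eq ha ?_ hexpand
  · exact mul_ne_zero hA₁ ((map_ne_zero _).mpr hA₂) this
  · rw [← two_mul]
    exact mul_ne_zero h2 ha

/-- for an odd prime `d` and a unit vector `g` with
`2‖g‖₀ > d`, if `rank G(g) ≠ d` then `rank G(g) ≥ 2d`. -/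
theorem stmt17 (d : ℕ) [NeZero d] (hp : d.Prime) (hodd : Odd d)
    (g : ZMod d → ℂ)
    (hg : ∑ n : ZMod d, ‖g n‖ ^ 2 = 1)
    (hsupp : d < 2 * {n : ZMod d | g n ≠ 0}.ncard)
    (hrank : (Gmat d g).rank ≠ d) :
    2 * d ≤ (Gmat d g).rank := by
  have := Fact.mk hp
  have h2 : (2 : ZMod d) ≠ 0 := Ring.two_ne_zero <| by
    rw [ZMod.ringChar_zmod_n]
    rintro rfl
    exact Nat.not_odd_iff_even.mpr even_two hodd
  rw [rank_Gmat, card_support_ambiguity] at hrank ⊢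
  have hne_one (ℓ : ZMod d) (hℓ : ℓ ≠ 0) : #(ambiguityColumn g ℓ) ≠ 1 := fun h1 ↦ by
    obtain ⟨k₀, hk₀⟩ := card_eq_one.mp h1
    simp [card_ambiguityColumn_eq_one h2 hg hℓ hk₀] at hrank
  simpa using two_mul_card_le_sum (f := fun ℓ ↦ #(ambiguityColumn g ℓ)) (i := 0)
    (by simpa using hp.two_le) (fun ℓ ↦ (ambiguityColumn_nonempty hsupp ℓ).card_pos) hne_one
    fun h0 ℓ _ ↦ card_ambiguityColumn_ne_two h2 (isFlat_of_card_ambiguityColumn_zero hg h0) ℓ
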